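/- arXiv:1203.3665 — 2 statements merged into one kernel-verified Lean document; each statement's English description precedes it below -/
import Mathlib

section
/- Define ξ_j(x) = Σ_{k=0}^j a^{(-1)}_{jk} x^{k(n-k)}, where (a^{(-1)}_{jk}) is the inverse of the lower-triangular matrix a_{kj} = k!(n-k)!/(j!(k-j)!(n-k-j)!). Define operators (D_r f)(x) = d/dx (x^{-(n-2r+2)} f(x)) and D^{r,j}(x) = D_r(D_{r-1}(···(D_1(x^n ξ_j(x)))···)). Then for each j ≤ n/2 and each 1 ≤ r ≤ j-1, D^{r,j}(x) = x^{n-2r} · r! · Σ_{k=r}^{j} a^{(-1)}_{jk} a_{kr} x^{(k-r)(n-k-r)}. -/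
/-- The matrix entries a_{kj} = k!(n-k)!/(j!(k-j)!(n-k-j)!) (for j ≤ k, 0 otherwise). -/
noncomputable def aCW (n k j : ℕ) : ℝ :=
  if j ≤ k then
    ((Nat.factorial k * Nat.factorial (n - k) : ℕ) : ℝ) /
      ((Nat.factorial j * Nat.factorial (k - j) * Nat.factorial (n - k - j) : ℕ) : ℝ)
  else 0

/-- The operator (D_r f)(x) = d/dx (x^{-(n-2r+2)} f(x)). -/
noncomputable def Dop (n r : ℕ) (f : ℝ → ℝ) : ℝ → ℝ :=
  fun x => deriv (fun y => f y / y ^ (n - 2 * r + 2)) x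

/-- The iterated operator D_r(D_{r-1}(···(D_1 g)···)). -/
noncomputable def Diter (n : ℕ) (g : ℝ → ℝ) : ℕ → (ℝ → ℝ)
  | 0 => g
  | r + 1 => Dop n (r + 1) (Diter n g r)

/-!
After dividing by `x ^ (n - 2r)`, the `r`-th iterate is `r!` times a sum of monomials
`a⁻¹_{jk} a_{kr} x^{(k-r)(n-k-r)}`; the operator `D_{r+1}` strips exactly this power and
differentiates. Differentiating a monomial lowers its exponent by one, and
`(k-r)(n-k-r) - 1 = (n - 2(r+1)) + (k-r-1)(n-k-r-1)`, while the new coefficient is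
`a_{kr} (k-r)(n-k-r) = (r+1) a_{k,r+1}`. The term `k = r` is constant, matching `a_{r,r+1} = 0`.
-/

open Finset Filter Topology

lemma aCW_zero_right (n k : ℕ) : aCW n k 0 = 1 := by
  rw [aCW, if_pos k.zero_le, Nat.factorial_zero, one_mul, Nat.sub_zero, Nat.sub_zero,
    Nat.mul_comm, div_self (Nat.cast_ne_zero.mpr (by positivity))]

lemma aCW_eq_zero_of_lt {n k j : ℕ} (h : k < j) : aCW n k j = 0 :=
  if_neg h.not_ge

lemma aCW_mul_sub_mul_sub {n k r : ℕ} (hk : r + 1 ≤ k) (hn : k + r + 1 ≤ n) :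
    aCW n k r * (((k - r) * (n - k - r) : ℕ) : ℝ) = (r + 1 : ℝ) * aCW n k (r + 1) := by
  rw [aCW, aCW, if_pos (by omega), if_pos hk, show k - r = k - (r + 1) + 1 by omega,
    show n - k - r = n - k - (r + 1) + 1 by omega, Nat.factorial_succ (k - (r + 1)),
    Nat.factorial_succ (n - k - (r + 1)), Nat.factorial_succ r]
  have := Nat.factorial_pos r
  have := Nat.factorial_pos (k - (r + 1))
  have := Nat.factorial_pos (n - k - (r + 1))
  push_cast
  field_simp

lemma sub_mul_sub_sub_one {n k r : ℕ} (hk : r + 1 ≤ k) (hn : k + r + 1 ≤ n) :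
    (k - r) * (n - k - r) - 1 = (n - 2 * (r + 1)) + (k - (r + 1)) * (n - k - (r + 1)) := by
  rw [show k - r = k - (r + 1) + 1 by omega, show n - k - r = n - k - (r + 1) + 1 by omega,
    show n - 2 * (r + 1) = k - (r + 1) + (n - k - (r + 1)) by omega]
  grind

lemma hasDerivAt_aCW_monomial {n k r : ℕ} (hk : r ≤ k) (hn : k + r + 1 ≤ n) (x : ℝ) :
    HasDerivAt (fun y => (r.factorial : ℝ) * aCW n k r * y ^ ((k - r) * (n - k - r)))
      (x ^ (n - 2 * (r + 1)) * ((r + 1).factorial * aCW n k (r + 1) *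
        x ^ ((k - (r + 1)) * (n - k - (r + 1))))) x := by
  rcases hk.eq_or_lt with rfl | hk
  · simpa [aCW_eq_zero_of_lt] using hasDerivAt_const x ((r.factorial : ℝ) * aCW n r r)
  refine ((hasDerivAt_pow ((k - r) * (n - k - r)) x).const_mul
    ((r.factorial : ℝ) * aCW n k r)).congr_deriv ?_
  rw [sub_mul_sub_sub_one hk hn, pow_add, Nat.factorial_succ]
  have hc := aCW_mul_sub_mul_sub hk hn
  push_cast at hc ⊢
  linear_combination (r.factorial : ℝ) * x ^ (n - 2 * (r + 1)) *
    x ^ ((k - (r + 1)) * (n - k - (r + 1))) * hc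

/-- `D^{r,j}(x) / x^{n-2r}`, with the coefficients `a⁻¹_{jk}` replaced by an arbitrary `c k`. -/
noncomputable def reducedIter (n : ℕ) (c : ℕ → ℝ) (j r : ℕ) (x : ℝ) : ℝ :=
  (r.factorial : ℝ) * ∑ k ∈ Icc r j, c k * aCW n k r * x ^ ((k - r) * (n - k - r))

lemma hasDerivAt_reducedIter {n j r : ℕ} (c : ℕ → ℝ) (hj : 2 * j ≤ n) (hr : r + 1 ≤ j) (x : ℝ) :
    HasDerivAt (reducedIter n c j r) (x ^ (n - 2 * (r + 1)) * reducedIter n c j (r + 1) x) x := by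
  have hsum : HasDerivAt (fun y => ∑ k ∈ Icc r j,
      c k * ((r.factorial : ℝ) * aCW n k r * y ^ ((k - r) * (n - k - r))))
      (∑ k ∈ Icc r j, c k * (x ^ (n - 2 * (r + 1)) * ((r + 1).factorial * aCW n k (r + 1) *
        x ^ ((k - (r + 1)) * (n - k - (r + 1)))))) x :=
    HasDerivAt.fun_sum fun k hk =>
      (hasDerivAt_aCW_monomial (mem_Icc.1 hk).1 (by grind) x).const_mul (c k)
  have hfun : reducedIter n c j r = fun y => ∑ k ∈ Icc r j,
      c k * ((r.factorial : ℝ) * aCW n k r * y ^ ((k - r) * (n - k - r))) := by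
    ext y
    simp only [reducedIter, mul_sum]
    exact sum_congr rfl fun _ _ => by ring
  rw [hfun]
  convert hsum using 1
  rw [Icc_eq_cons_Ioc (by omega : r ≤ j), sum_cons, aCW_eq_zero_of_lt r.lt_succ_self,
    ← Icc_add_one_left_eq_Ioc, reducedIter, mul_sum, mul_sum]
  simp only [mul_zero, zero_mul, zero_add]
  exact sum_congr rfl fun _ _ => by ring

lemma Dop_succ_apply {n r : ℕ} {f g : ℝ → ℝ} {g' x : ℝ} (hr : 2 * (r + 1) ≤ n) (hx : x ≠ 0)
    (hf : f =ᶠ[𝓝 x] fun y => y ^ (n - 2 * r) * g y) (hg : HasDerivAt g g' x) :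
    Dop n (r + 1) f x = g' := by
  rw [Dop, show n - 2 * (r + 1) + 2 = n - 2 * r by omega]
  refine (hg.congr_of_eventuallyEq ?_).deriv
  filter_upwards [hf, eventually_ne_nhds hx] with y hfy hy
  rw [hfy, mul_div_cancel_left₀ _ (pow_ne_zero _ hy)]

lemma Diter_eq_reducedIter {n j : ℕ} (c : ℕ → ℝ) (ξ : ℝ → ℝ)
    (hξ : ∀ x, ξ x = ∑ k ∈ range (j + 1), c k * x ^ (k * (n - k))) (hj : 2 * j ≤ n) :
    ∀ r ≤ j, ∀ x > 0,
      Diter n (fun y => y ^ n * ξ y) r x = x ^ (n - 2 * r) * reducedIter n c j r x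
  | 0, _, x, _ => by
    simp only [Diter, reducedIter, hξ, range_eq_Ico, Ico_add_one_right_eq_Icc, aCW_zero_right,
      Nat.factorial_zero, Nat.cast_one, one_mul, mul_one, mul_zero, Nat.sub_zero]
  | r + 1, hr, x, hx => by
    refine Dop_succ_apply (by omega) hx.ne' ?_ (hasDerivAt_reducedIter c hj hr x)
    filter_upwards [eventually_gt_nhds hx] with y hy
    exact Diter_eq_reducedIter c ξ hξ hj r (by omega) y hy

theorem stmt6_general (n : ℕ) (ainv : ℕ → ℕ → ℝ)
    (ξ : ℕ → ℝ → ℝ)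
    (hξ : ∀ j x, ξ j x = ∑ k ∈ Finset.range (j + 1), ainv j k * x ^ (k * (n - k)))
    (j r : ℕ) (hj : 2 * j ≤ n) (hrj : r ≤ j - 1)
    (x : ℝ) (hx : 0 < x) :
    Diter n (fun y => y ^ n * ξ j y) r x =
      x ^ (n - 2 * r) * (Nat.factorial r : ℝ) *
        ∑ k ∈ Finset.Icc r j, ainv j k * aCW n k r * x ^ ((k - r) * (n - k - r)) := by
  rw [Diter_eq_reducedIter (ainv j) (ξ j) (hξ j) hj r (by omega) x hx, reducedIter, mul_assoc]

/-- The identity D^{r,j}(x) = x^{n-2r} · r! · Σ_{k=r}^j a⁻¹_{jk} a_{kr} x^{(k-r)(n-k-r)},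
    where ξ_j(x) = Σ_{k=0}^j a⁻¹_{jk} x^{k(n-k)} and a⁻¹ is the inverse of the
    lower-triangular matrix (a_{kj}). -/
theorem stmt6 (n : ℕ) (ainv : ℕ → ℕ → ℝ)
    (hinv : ∀ j ≤ n / 2, ∀ k ≤ n / 2,
      (∑ l ∈ Finset.range (n / 2 + 1), ainv j l * aCW n l k) =
        if j = k then 1 else 0)
    (ξ : ℕ → ℝ → ℝ)
    (hξ : ∀ j x, ξ j x = ∑ k ∈ Finset.range (j + 1), ainv j k * x ^ (k * (n - k)))
    (j r : ℕ) (hj : 2 * j ≤ n) (hr : 1 ≤ r) (hrj : r ≤ j - 1)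
    (x : ℝ) (hx : 0 < x) :
    Diter n (fun y => y ^ n * ξ j y) r x =
      x ^ (n - 2 * r) * (Nat.factorial r : ℝ) *
        ∑ k ∈ Finset.Icc r j, ainv j k * aCW n k r * x ^ ((k - r) * (n - k - r)) :=
  stmt6_general n ainv ξ hξ j r hj hrj x hx
end

section
/- With notation as in the previous statement, D^{j-1,j}(x) = x^{n-2j+2} · (j-1)! · (a_{j,j-1}/a_{jj}) · (x^{n-2j+1} - 1), and in particular D^{j-1,j}(x) ≥ 0 for all x ≥ 1 when n - 2j + 1 ≥ 0. -/
open Finset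
open scoped Nat

section LowerTriangular

variable {R : Type*} [Ring R] [NoZeroDivisors R] {A B : ℕ → ℕ → R} {N j : ℕ}

theorem leftInverse_eq_zero_of_lt (hA : ∀ l k, l < k → A l k = 0)
    (hdiag : ∀ k ≤ N, A k k ≠ 0)
    (hBA : ∀ k ≤ N, ∑ l ∈ range (N + 1), B j l * A l k = if j = k then 1 else 0)
    {k : ℕ} (hjk : j < k) (hkN : k ≤ N) : B j k = 0 := by
  induction hd : N - k using Nat.strong_induction_on generalizing k with
  | _ d ih =>
    have hrow := hBA k hkN
    rw [if_neg hjk.ne, sum_eq_single_of_mem k (mem_range.2 (by omega))] at hrow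
    · exact (mul_eq_zero.1 hrow).resolve_right (hdiag k hkN)
    intro l hl hlk
    rcases lt_or_gt_of_ne hlk with hlk | hlk
    · rw [hA l k hlk, mul_zero]
    · have hlN : l ≤ N := Nat.lt_succ_iff.1 (mem_range.1 hl)
      rw [ih (N - l) (by omega) (by omega) hlN rfl, zero_mul]

theorem leftInverse_sum_eq_sum_Icc (hA : ∀ l k, l < k → A l k = 0)
    (hdiag : ∀ k ≤ N, A k k ≠ 0)
    (hBA : ∀ k ≤ N, ∑ l ∈ range (N + 1), B j l * A l k = if j = k then 1 else 0)
    {k : ℕ} (hjN : j ≤ N) :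
    ∑ l ∈ range (N + 1), B j l * A l k = ∑ l ∈ Icc k j, B j l * A l k := by
  symm
  refine sum_subset (fun l hl => mem_range.2 (by have := mem_Icc.1 hl; omega)) fun l hl hl' => ?_
  rcases Nat.lt_or_ge l k with hlk | hkl
  · rw [hA l k hlk, mul_zero]
  · have hjl : j < l := by simp_all
    have hlN : l ≤ N := Nat.lt_succ_iff.1 (mem_range.1 hl)
    rw [leftInverse_eq_zero_of_lt hA hdiag hBA hjl hlN, zero_mul]

theorem leftInverse_mul_diag (hA : ∀ l k, l < k → A l k = 0)
    (hdiag : ∀ k ≤ N, A k k ≠ 0)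
    (hBA : ∀ k ≤ N, ∑ l ∈ range (N + 1), B j l * A l k = if j = k then 1 else 0)
    (hjN : j ≤ N) : B j j * A j j = 1 := by
  simpa [leftInverse_sum_eq_sum_Icc hA hdiag hBA hjN] using hBA j hjN

theorem leftInverse_subdiag {m : ℕ} (hA : ∀ l k, l < k → A l k = 0)
    (hdiag : ∀ k ≤ N, A k k ≠ 0)
    (hBA : ∀ k ≤ N, ∑ l ∈ range (N + 1), B (m + 1) l * A l k = if m + 1 = k then 1 else 0)
    (hmN : m + 1 ≤ N) : B (m + 1) m * A m m + B (m + 1) (m + 1) * A (m + 1) m = 0 := by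
  have := hBA m (by omega)
  rwa [leftInverse_sum_eq_sum_Icc hA hdiag hBA hmN, sum_Icc_succ_top (Nat.le_succ m), Icc_self,
    sum_singleton, if_neg (by omega)] at this

end LowerTriangular

theorem aCW_of_lt {n k j : ℕ} (hkj : k < j) : aCW n k j = 0 := by
  rw [aCW, if_neg hkj.not_ge]

theorem aCW_nonneg (n k j : ℕ) : 0 ≤ aCW n k j := by
  unfold aCW; split_ifs <;> positivity

theorem aCW_eq_choose_mul_descFactorial {n k j : ℕ} (hjk : j ≤ k) (hkn : k + j ≤ n) :
    aCW n k j = k.choose j * (n - k).descFactorial j := by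
  rw [aCW, if_pos hjk, div_eq_iff (by positivity)]
  rw [← Nat.choose_mul_factorial_mul_factorial hjk,
    ← Nat.factorial_mul_descFactorial (show j ≤ n - k by omega)]
  push_cast
  ring

theorem aCW_self {n k : ℕ} (hk : 2 * k ≤ n) : aCW n k k = (n - k).descFactorial k := by
  rw [aCW_eq_choose_mul_descFactorial le_rfl (by omega), Nat.choose_self, Nat.cast_one, one_mul]

theorem aCW_self_pos {n k : ℕ} (hk : 2 * k ≤ n) : 0 < aCW n k k := by
  rw [aCW_self hk]
  exact_mod_cast Nat.descFactorial_pos.2 (by omega)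

section MonomialCalculus

open Set Polynomial

theorem Dop_eqOn_sum_zpow {ι : Type*} (n r : ℕ) (s : Finset ι) (c : ι → ℝ) (e : ι → ℤ)
    {f : ℝ → ℝ} (hf : EqOn f (fun y => ∑ i ∈ s, c i * y ^ e i) (Ioi 0)) :
    EqOn (Dop n r f)
      (fun x => ∑ i ∈ s, c i * ((e i - (n - 2 * r + 2 : ℕ) : ℤ) : ℝ) *
        x ^ (e i - (n - 2 * r + 2 : ℕ) - 1)) (Ioi 0) := by
  intro x hx
  set t : ℕ := n - 2 * r + 2
  have hquot : (fun y => f y / y ^ t) =ᶠ[nhds x] fun y => ∑ i ∈ s, c i * y ^ (e i - t) := by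
    filter_upwards [Ioi_mem_nhds hx] with y hy
    rw [hf hy, sum_div]
    refine sum_congr rfl fun i _ => ?_
    rw [mul_div_assoc, ← zpow_natCast, ← zpow_sub₀ (ne_of_gt hy)]
  have hderiv : HasDerivAt (fun y => ∑ i ∈ s, c i * y ^ (e i - t))
      (∑ i ∈ s, c i * (((e i - t : ℤ) : ℝ) * x ^ (e i - t - 1))) x :=
    HasDerivAt.fun_sum fun i _ => (hasDerivAt_zpow _ x (Or.inl (ne_of_gt hx))).const_mul _
  change deriv _ x = _
  rw [hquot.deriv_eq, hderiv.deriv]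
  simp only [mul_assoc]

theorem Diter_eqOn_sum (n : ℕ) (s : Finset ℕ) (c : ℕ → ℝ) {g : ℝ → ℝ}
    (hg : EqOn g (fun y => ∑ k ∈ s, c k * y ^ ((n : ℤ) + k * ((n : ℤ) - k))) (Ioi 0))
    {p : ℕ} (hp : 2 * p ≤ n) :
    EqOn (Diter n g p)
      (fun x => ∑ k ∈ s, c k * ((descPochhammer ℝ p).eval (k : ℝ) *
        (descPochhammer ℝ p).eval ((n : ℝ) - k)) *
        x ^ ((n : ℤ) + k * ((n : ℤ) - k) - p * ((n : ℤ) + 2 - p))) (Ioi 0) := by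
  induction p with
  | zero => simpa [Diter] using hg
  | succ p ih =>
    refine (Dop_eqOn_sum_zpow _ _ _ _ _ (ih (by omega))).trans fun x _ => sum_congr rfl fun k _ => ?_
    have ht : ((n - 2 * (p + 1) + 2 : ℕ) : ℤ) = n - 2 * p := by omega
    have hexp : (n : ℤ) + k * ((n : ℤ) - k) - ((p + 1 : ℕ) : ℤ) * ((n : ℤ) + 2 - ((p + 1 : ℕ) : ℤ))
        = (n : ℤ) + k * ((n : ℤ) - k) - p * ((n : ℤ) + 2 - p) - (n - 2 * p) - 1 := by
      push_cast; ring
    have hfactor : (n : ℤ) + k * ((n : ℤ) - k) - p * ((n : ℤ) + 2 - p) - (n - 2 * p)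
        = (k - p) * (n - k - p) := by ring
    rw [ht, hexp, hfactor, descPochhammer_succ_eval, descPochhammer_succ_eval]
    push_cast
    ring

theorem descPochhammer_eval_natCast_eq_zero {R : Type*} [Ring R] {p k : ℕ} (hkp : k < p) :
    (descPochhammer R p).eval (k : R) = 0 := by
  rw [descPochhammer_eval_eq_descFactorial, Nat.descFactorial_eq_zero_iff_lt.2 hkp, Nat.cast_zero]

theorem Diter_eq_of_eqOn_sum_range (n m : ℕ) (c : ℕ → ℝ) {g : ℝ → ℝ}
    (hg : EqOn g (fun y => ∑ k ∈ range (m + 2), c k * y ^ ((n : ℤ) + k * ((n : ℤ) - k)))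
      (Ioi 0))
    (hm : 2 * (m + 1) ≤ n) {x : ℝ} (hx : 0 < x) :
    Diter n g m x = x ^ (n - 2 * (m + 1) + 2) * (m ! : ℝ) *
      (c m * aCW n m m + c (m + 1) * aCW n (m + 1) m * x ^ (n - 2 * (m + 1) + 1)) := by
  rw [Diter_eqOn_sum n _ c hg (by omega) hx]
  dsimp only
  rw [sum_range_succ, sum_range_succ,
    sum_eq_zero fun k hk => by
      rw [descPochhammer_eval_natCast_eq_zero (mem_range.1 hk), zero_mul, mul_zero, zero_mul],
    zero_add]
  have hcoeff_m : (descPochhammer ℝ m).eval (m : ℝ) * (descPochhammer ℝ m).eval ((n : ℝ) - m)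
      = m ! * aCW n m m := by
    rw [← Nat.cast_sub (by omega), descPochhammer_eval_eq_descFactorial,
      descPochhammer_eval_eq_descFactorial, Nat.descFactorial_self, aCW_self (by omega)]
  have hcoeff_succ : (descPochhammer ℝ m).eval ((m + 1 : ℕ) : ℝ) *
      (descPochhammer ℝ m).eval ((n : ℝ) - (m + 1 : ℕ)) = m ! * aCW n (m + 1) m := by
    have hdesc : (m + 1).descFactorial m = (m + 1) * m ! := by
      simpa [Nat.descFactorial_self] using Nat.succ_descFactorial m m
    rw [← Nat.cast_sub (by omega), descPochhammer_eval_eq_descFactorial,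
      descPochhammer_eval_eq_descFactorial, hdesc,
      aCW_eq_choose_mul_descFactorial (Nat.le_succ m) (by omega), Nat.choose_succ_self_right]
    push_cast
    ring
  have hexp_m : x ^ ((n : ℤ) + m * ((n : ℤ) - m) - m * ((n : ℤ) + 2 - m))
      = x ^ (n - 2 * (m + 1) + 2) := by
    rw [← zpow_natCast]; congr 1; push_cast [Nat.cast_sub hm]; ring
  have hexp_succ : x ^ ((n : ℤ) + (m + 1 : ℕ) * ((n : ℤ) - (m + 1 : ℕ)) - m * ((n : ℤ) + 2 - m))
      = x ^ (n - 2 * (m + 1) + 2) * x ^ (n - 2 * (m + 1) + 1) := by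
    rw [← pow_add, ← zpow_natCast]; congr 1; push_cast [Nat.cast_sub hm]; ring
  rw [hcoeff_m, hcoeff_succ, hexp_m, hexp_succ]
  ring

end MonomialCalculus

/-- D^{j-1,j}(x) = x^{n-2j+2}·(j-1)!·(a_{j,j-1}/a_{jj})·(x^{n-2j+1} − 1), and in
    particular D^{j-1,j}(x) ≥ 0 for x ≥ 1 (here n - 2j + 1 ≥ 0 since 2j ≤ n). -/
theorem stmt7 (n : ℕ) (ainv : ℕ → ℕ → ℝ)
    (hinv : ∀ j ≤ n / 2, ∀ k ≤ n / 2,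
      (∑ l ∈ Finset.range (n / 2 + 1), ainv j l * aCW n l k) =
        if j = k then 1 else 0)
    (ξ : ℕ → ℝ → ℝ)
    (hξ : ∀ j x, ξ j x = ∑ k ∈ Finset.range (j + 1), ainv j k * x ^ (k * (n - k)))
    (j : ℕ) (hj1 : 1 ≤ j) (hj : 2 * j ≤ n) (x : ℝ) (hx : 0 < x) :
    Diter n (fun y => y ^ n * ξ j y) (j - 1) x =
      x ^ (n - 2 * j + 2) * (Nat.factorial (j - 1) : ℝ) *
        (aCW n j (j - 1) / aCW n j j) * (x ^ (n - 2 * j + 1) - 1) ∧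
    (1 ≤ x → 0 ≤ Diter n (fun y => y ^ n * ξ j y) (j - 1) x) := by
  obtain ⟨m, rfl⟩ : ∃ m, j = m + 1 := ⟨j - 1, by omega⟩
  rw [Nat.add_sub_cancel]
  have hdiag : ∀ k ≤ n / 2, aCW n k k ≠ 0 := fun k hk => (aCW_self_pos (by omega)).ne'
  have hrow := hinv (m + 1) (by omega)
  have hinv_diag := leftInverse_mul_diag (fun _ _ => aCW_of_lt) hdiag hrow (by omega)
  have hinv_subdiag := leftInverse_subdiag (fun _ _ => aCW_of_lt) hdiag hrow (by omega)
  have hrepr : Set.EqOn (fun y => y ^ n * ξ (m + 1) y)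
      (fun y => ∑ k ∈ range (m + 2), ainv (m + 1) k * y ^ ((n : ℤ) + k * ((n : ℤ) - k)))
      (Set.Ioi 0) := fun y _ => by
    simp only [hξ, mul_sum]
    refine sum_congr rfl fun k hk => ?_
    have hkn : k ≤ n := by have := mem_range.1 hk; omega
    rw [show (n : ℤ) + k * ((n : ℤ) - k) = ((n + k * (n - k) : ℕ) : ℤ) by
      push_cast [Nat.cast_sub hkn]; ring, zpow_natCast, pow_add]
    ring
  have hD : Diter n (fun y => y ^ n * ξ (m + 1) y) m x = x ^ (n - 2 * (m + 1) + 2) *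
      (m ! : ℝ) * (aCW n (m + 1) m / aCW n (m + 1) (m + 1)) * (x ^ (n - 2 * (m + 1) + 1) - 1) := by
    rw [Diter_eq_of_eqOn_sum_range n m _ hrepr hj hx, eq_neg_of_add_eq_zero_left hinv_subdiag,
      eq_one_div_of_mul_eq_one_left hinv_diag]
    ring
  refine ⟨hD, fun hx1 => hD ▸ mul_nonneg ?_ (sub_nonneg.2 (one_le_pow₀ hx1))⟩
  exact mul_nonneg (by positivity) (div_nonneg (aCW_nonneg _ _ _) (aCW_nonneg _ _ _))
end
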